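/- Let k be a field and n, m positive integers such that char k does not divide n − m. Then any unital k-algebra Q admitting a comeasuring of Frobenius algebras from the matrix Frobenius algebra M_m(k) to M_n(k) satisfies 1_Q = 0, i.e., Q = 0; in particular the universal comeasuring algebra A_{M_n(k),M_m(k)} is zero. -/

import Mathlib

open TensorProduct

/-- A comeasuring of Frobenius algebras from `(A, Δ_A, ν_A)` to `(B, Δ_B, ν_B)` with
coefficient algebra `Q`: a linear map `ρ : A → B ⊗ Q`, `ρ(a) = a⁽⁰⁾ ⊗ a⁽¹⁾`, which is an
algebra map and satisfies
`a^{(1)[0]} ⊗ a^{(2)[0]} ⊗ a^{(1)[1]}a^{(2)[1]} = a^{[0](1)} ⊗ a^{[0](2)} ⊗ a^{[1]}`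
and `ν_B(a⁽⁰⁾)a⁽¹⁾ = ν_A(a)1_Q`. -/
def IsFrobComeasuring {k A B Q : Type*} [CommRing k] [Ring A] [Algebra k A]
    [Ring B] [Algebra k B] [Ring Q] [Algebra k Q]
    (ΔA : A →ₗ[k] A ⊗[k] A) (νA : A →ₗ[k] k)
    (ΔB : B →ₗ[k] B ⊗[k] B) (νB : B →ₗ[k] k)
    (ρ : A →ₗ[k] B ⊗[k] Q) : Prop :=
  (∀ a a' : A, ρ (a * a') = ρ a * ρ a') ∧
  (ρ 1 = 1) ∧
  (∀ a : A,
    TensorProduct.map (LinearMap.id : B ⊗[k] B →ₗ[k] B ⊗[k] B) (LinearMap.mul' k Q)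
        (TensorProduct.tensorTensorTensorComm k B Q B Q
          (TensorProduct.map ρ ρ (ΔA a)))
      = TensorProduct.map ΔB (LinearMap.id : Q →ₗ[k] Q) (ρ a)) ∧
  (∀ a : A,
    TensorProduct.lid k Q
        (TensorProduct.map νB (LinearMap.id : Q →ₗ[k] Q) (ρ a)) = νA a • (1 : Q))

section GroupFrobenius

variable (k : Type*) [Field k] (G : Type*) [Group G] [Fintype G] [DecidableEq G]

/-- The Frobenius comultiplication `Δ(g) = Σ_{h ∈ G} gh⁻¹ ⊗ h` on a finite group
algebra. -/
noncomputable def groupComul :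
    MonoidAlgebra k G →ₗ[k] MonoidAlgebra k G ⊗[k] MonoidAlgebra k G :=
  (Finsupp.lsum k fun g =>
    LinearMap.toSpanSingleton k (MonoidAlgebra k G ⊗[k] MonoidAlgebra k G)
      (∑ h : G, MonoidAlgebra.single (g * h⁻¹) (1 : k) ⊗ₜ[k] MonoidAlgebra.single h (1 : k)))
      ∘ₗ (MonoidAlgebra.coeffLinearEquiv k).toLinearMap

/-- The Frobenius counit `ν(g) = δ_{g,1}` on a finite group algebra. -/
noncomputable def groupCounit : MonoidAlgebra k G →ₗ[k] k :=
  Finsupp.lapply (1 : G) ∘ₗ (MonoidAlgebra.coeffLinearEquiv k).toLinearMap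

end GroupFrobenius

section MatrixFrobenius

variable (k : Type*) [Field k] (n : ℕ)

/-- The Frobenius comultiplication `Δ(E_{ij}) = Σ_l E_{il} ⊗ E_{lj}` on the matrix
algebra `M_n(k)`. -/
noncomputable def matrixComul :
    Matrix (Fin n) (Fin n) k →ₗ[k]
      Matrix (Fin n) (Fin n) k ⊗[k] Matrix (Fin n) (Fin n) k where
  toFun M := ∑ i : Fin n, ∑ j : Fin n, ∑ l : Fin n,
    M i j • (Matrix.single i l (1 : k) ⊗ₜ[k] Matrix.single l j (1 : k))
  map_add' M N := by
    simp [Matrix.add_apply, add_smul, Finset.sum_add_distrib]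
  map_smul' c M := by
    simp [Matrix.smul_apply, smul_smul, Finset.smul_sum]

/-- The Frobenius counit on `M_n(k)` : the trace, `ν(E_{ij}) = δ_{ij}`. -/
noncomputable def matrixCounit : Matrix (Fin n) (Fin n) k →ₗ[k] k :=
  Matrix.traceLinearMap (Fin n) k k

end MatrixFrobenius

/-! The counit axiom at `a = 1`, combined with `ρ 1 = 1 ⊗ 1`, reads `ν_B(1) • 1_Q = ν_A(1) • 1_Q`.
For matrix algebras the counit is the trace, so `n • 1_Q = m • 1_Q`; as `n - m` is a unit in `k`,
this forces `1_Q = 0`. -/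

theorem IsFrobComeasuring.counit_one_smul_one {k A B Q : Type*} [CommRing k] [Ring A]
    [Algebra k A] [Ring B] [Algebra k B] [Ring Q] [Algebra k Q]
    {ΔA : A →ₗ[k] A ⊗[k] A} {νA : A →ₗ[k] k} {ΔB : B →ₗ[k] B ⊗[k] B} {νB : B →ₗ[k] k}
    {ρ : A →ₗ[k] B ⊗[k] Q} (hρ : IsFrobComeasuring ΔA νA ΔB νB ρ) :
    νB 1 • (1 : Q) = νA 1 • (1 : Q) := by
  have h := hρ.2.2.2 1
  rwa [hρ.2.1, Algebra.TensorProduct.one_def, map_tmul, LinearMap.id_apply, lid_tmul] at h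

theorem matrixCounit_one (k : Type*) [Field k] (n : ℕ) : matrixCounit k n 1 = n := by
  simp [matrixCounit]

theorem natCast_ne_natCast_of_not_ringChar_dvd {R : Type*} [Ring R] {n m : ℕ}
    (h : ¬ ((ringChar R : ℤ) ∣ (n : ℤ) - (m : ℤ))) : (n : R) ≠ m := by
  rw [Ne, ← sub_eq_zero]
  exact_mod_cast mt (CharP.intCast_eq_zero_iff R (ringChar R) _).mp h

theorem matrix_comeasuring_trivial_general {k : Type*} [Field k] {n m : ℕ}
    (hchar : ¬ ((ringChar k : ℤ) ∣ (n : ℤ) - (m : ℤ)))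
    (Q : Type*) [Ring Q] [Algebra k Q]
    (ρ : Matrix (Fin m) (Fin m) k →ₗ[k] Matrix (Fin n) (Fin n) k ⊗[k] Q)
    (hρ : IsFrobComeasuring (matrixComul k m) (matrixCounit k m)
      (matrixComul k n) (matrixCounit k n) ρ) :
    (1 : Q) = 0 ∧ Subsingleton Q := by
  have hnm : ((n : k) - m) • (1 : Q) = 0 := by
    rw [sub_smul, sub_eq_zero, ← matrixCounit_one k n, ← matrixCounit_one k m]
    exact hρ.counit_one_smul_one
  have hne : (n : k) - m ≠ 0 := sub_ne_zero.mpr (natCast_ne_natCast_of_not_ringChar_dvd hchar)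
  have h1 : (1 : Q) = 0 := (smul_eq_zero.mp hnm).resolve_left hne
  exact ⟨h1, subsingleton_of_zero_eq_one h1.symm⟩

/-- If `char k` does not divide `n − m` (with `n, m` positive), then any unital
`k`-algebra `Q` carrying a comeasuring of Frobenius algebras from `M_m(k)` to `M_n(k)`
satisfies `1_Q = 0`, i.e. `Q = 0`; in particular the universal comeasuring algebra
between these matrix Frobenius algebras is zero. -/
theorem matrix_comeasuring_trivial {k : Type*} [Field k] {n m : ℕ}
    (hn : 0 < n) (hm : 0 < m)
    (hchar : ¬ ((ringChar k : ℤ) ∣ (n : ℤ) - (m : ℤ)))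
    (Q : Type*) [Ring Q] [Algebra k Q]
    (ρ : Matrix (Fin m) (Fin m) k →ₗ[k] Matrix (Fin n) (Fin n) k ⊗[k] Q)
    (hρ : IsFrobComeasuring (matrixComul k m) (matrixCounit k m)
      (matrixComul k n) (matrixCounit k n) ρ) :
    (1 : Q) = 0 ∧ Subsingleton Q :=
  matrix_comeasuring_trivial_general hchar Q ρ hρ
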